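/- arXiv:1708.09821 — 2 statements merged into one kernel-verified Lean document; each statement's English description precedes it below -/
import Mathlib

section
/- Let X be a Polish space and Y a standard Borel space. Let 𝒰 be a countable basis for the topology of X consisting of nonempty open sets, and let 𝒜 be a countable family of Borel subsets of Y that generates the Borel σ-algebra of Y. Then Σ(X,Y) is generated by the countable family of sets {[U, A] : U ∈ 𝒰, A ∈ 𝒜}. -/
open Set Function Topology

namespace DescColor

/-- A set is *Baire measurable* if it differs from an open set by a meager set. -/
def BaireMSet {X : Type*} [TopologicalSpace X] (S : Set X) : Prop :=
  ∃ U : Set X, IsOpen U ∧ IsMeagre (symmDiff S U)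

/-- A function is *Baire measurable* if preimages of measurable (Borel) sets are
Baire measurable. -/
def BaireMFun {X Y : Type*} [TopologicalSpace X] [MeasurableSpace Y] (f : X → Y) : Prop :=
  ∀ B : Set Y, MeasurableSet B → BaireMSet (f ⁻¹' B)

variable {Γ : Type*}

/-- The shift action of `Γ` on colorings `Γ → ℕ`: `(γ · ω)(δ) = ω (δ γ)`. -/
def shift [Group Γ] (γ : Γ) (ω : Γ → ℕ) : Γ → ℕ := fun δ => ω (δ * γ)

/-- A subshift: a closed shift-invariant set of colorings. -/
def IsSubshift [Group Γ] (Ω : Set (Γ → ℕ)) : Prop :=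
  IsClosed Ω ∧ ∀ (γ : Γ), ∀ ω ∈ Ω, shift γ ω ∈ Ω

/-- The coding map `π_f(x)(γ) = f (γ • x)`. -/
def codingMap [Group Γ] {X : Type*} [MulAction Γ X] (f : X → ℕ) (x : X) : Γ → ℕ :=
  fun γ => f (γ • x)

/-- The action of `Γ` on `X` admits a Baire measurable `Ω`-coloring. -/
def HasBMColoring [Group Γ] (X : Type*) [TopologicalSpace X] [MulAction Γ X]
    (Ω : Set (Γ → ℕ)) : Prop :=
  ∃ f : X → ℕ, BaireMFun f ∧ {x : X | codingMap f x ∈ Ω} ∈ residual X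

/-- The action of `Γ` on `X` is generically smooth. -/
def GenSmooth (Γ : Type*) [Group Γ] (X : Type*) [TopologicalSpace X] [MulAction Γ X] : Prop :=
  ∃ f : X → ℝ, BaireMFun f ∧ ∀ x y : X, f x = f y ↔ ∃ γ : Γ, γ • x = y

/-- The shift action of `Γ` on `ℕ^Γ` admits a Baire measurable `Ω`-coloring. -/
def ShiftHasBMColoring (Γ : Type*) [Group Γ] (Ω : Set (Γ → ℕ)) : Prop :=
  ∃ f : (Γ → ℕ) → ℕ, BaireMFun f ∧
    {ω : Γ → ℕ | (fun γ : Γ => f (shift γ ω)) ∈ Ω} ∈ residual (Γ → ℕ)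

/-- A free continuous action of `Γ` on a Polish space. -/
structure FreePolishAction (Γ : Type*) [Group Γ] where
  X : Type
  ts : TopologicalSpace X
  polish : @PolishSpace X ts
  smul : Γ → X → X
  one_smul' : ∀ x, smul 1 x = x
  mul_smul' : ∀ γ δ x, smul (γ * δ) x = smul γ (smul δ x)
  cont : ∀ γ : Γ, @Continuous X X ts ts (smul γ)
  free : ∀ (γ : Γ) (x : X), smul γ x = x → γ = 1

/-- A free continuous action on a Polish space admits a Baire measurable `Ω`-coloring. -/
def FreePolishAction.HasBMCol [Group Γ] (α : FreePolishAction Γ) (Ω : Set (Γ → ℕ)) : Prop :=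
  letI := α.ts
  ∃ f : α.X → ℕ, BaireMFun f ∧ {x : α.X | (fun γ : Γ => f (α.smul γ x)) ∈ Ω} ∈ residual α.X

/-- A free continuous action on a Polish space is generically smooth. -/
def FreePolishAction.IsGenSmooth [Group Γ] (α : FreePolishAction Γ) : Prop :=
  letI := α.ts
  ∃ f : α.X → ℝ, BaireMFun f ∧ ∀ x y : α.X, f x = f y ↔ ∃ γ : Γ, α.smul γ x = y

/-- A subshift is *hard* if every free continuous action of `Γ` on a Polish space that
admits a Baire measurable `Ω`-coloring is generically smooth. -/
def Hard (Γ : Type*) [Group Γ] (Ω : Set (Γ → ℕ)) : Prop :=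
  ∀ α : FreePolishAction Γ, α.HasBMCol Ω → α.IsGenSmooth

/-- A subshift is *easy* if every free continuous action of `Γ` on a Polish space
admits a Baire measurable `Ω`-coloring. -/
def Easy (Γ : Type*) [Group Γ] (Ω : Set (Γ → ℕ)) : Prop :=
  ∀ α : FreePolishAction Γ, α.HasBMCol Ω

/-- Finite partial colorings of `Γ`: partial maps `Γ ⇀ ℕ` with finite domain. -/
abbrev FPC (Γ : Type*) : Type _ := {φ : Γ → Option ℕ // {γ : Γ | φ γ ≠ none}.Finite}

/-- The domain of a finite partial coloring. -/
def domP (φ : FPC Γ) : Set Γ := {γ : Γ | φ.1 γ ≠ none}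

/-- `Fin(Ω)`: the set of finite partial colorings extending to an element of `Ω`. -/
def FinOf (Ω : Set (Γ → ℕ)) : Set (FPC Γ) :=
  {φ | ∃ ω ∈ Ω, ∀ (γ : Γ) (c : ℕ), φ.1 γ = some c → ω γ = c}

/-- `g : FPC Γ → Bool` codes (the set `Fin(Ω)` of) the subshift `Ω`. -/
def CodesSubshift [Group Γ] (g : FPC Γ → Bool) (Ω : Set (Γ → ℕ)) : Prop :=
  IsSubshift Ω ∧ ∀ φ : FPC Γ, g φ = true ↔ φ ∈ FinOf Ω

/-- The shift action of `Γ` on finite partial colorings: `(γ · φ)(δ) = φ(δγ)`. -/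
def shiftP [Group Γ] (γ : Γ) (φ : FPC Γ) : FPC Γ :=
  ⟨fun δ => φ.1 (δ * γ), by
    apply (φ.2.image fun δ => δ * γ⁻¹).subset
    intro δ hδ
    exact ⟨δ * γ, hδ, by simp⟩⟩

/-- The empty partial coloring. -/
def emptyP (Γ : Type*) : FPC Γ := ⟨fun _ => none, by simp⟩

/-- The union (join) of two partial colorings (values of `φ` take precedence). -/
def joinP (φ ψ : FPC Γ) : FPC Γ :=
  ⟨fun δ => match φ.1 δ with | some c => some c | none => ψ.1 δ, by
    apply (φ.2.union ψ.2).subset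
    intro δ hδ
    by_cases h : φ.1 δ = none
    · right
      simp only [mem_setOf_eq, h] at hδ
      exact hδ
    · exact Or.inl h⟩

/-- The union of a finite list of partial colorings. -/
def joinList (l : List (FPC Γ)) : FPC Γ := l.foldr joinP (emptyP Γ)

/-- `φ[γ, r]`: the restriction of `φ` to the closed ball `B(γ, r)`. -/
noncomputable def restrictBall [MetricSpace Γ] (φ : FPC Γ) (γ : Γ) (r : ℝ) : FPC Γ :=
  ⟨fun δ => if dist γ δ ≤ r then φ.1 δ else none, by
    apply φ.2.subset
    intro δ hδ
    by_cases h : dist γ δ ≤ r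
    · simp only [mem_setOf_eq, if_pos h] at hδ
      exact hδ
    · simp only [mem_setOf_eq, if_neg h] at hδ
      exact absurd rfl hδ⟩

/-- `φ ∪ {(γ, c)}`. -/
def insertP [DecidableEq Γ] (φ : FPC Γ) (γ : Γ) (c : ℕ) : FPC Γ :=
  ⟨fun δ => if δ = γ then some c else φ.1 δ, by
    apply (φ.2.insert γ).subset
    intro δ hδ
    by_cases h : δ = γ
    · exact Or.inl h
    · right
      simp only [mem_setOf_eq, if_neg h] at hδ
      exact hδ⟩

/-- The restriction of a total coloring `ω` to a finite set `S`. -/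
def restrictTo [DecidableEq Γ] (ω : Γ → ℕ) (S : Finset Γ) : FPC Γ :=
  ⟨fun δ => if δ ∈ S then some (ω δ) else none, by
    apply S.finite_toSet.subset
    intro δ hδ
    by_cases h : δ ∈ S
    · exact h
    · simp only [mem_setOf_eq, if_neg h] at hδ
      exact absurd rfl hδ⟩

/-- Post-composition of a partial coloring with `ρ : ℕ → ℕ`. -/
def mapP (ρ : ℕ → ℕ) (φ : FPC Γ) : FPC Γ :=
  ⟨fun δ => (φ.1 δ).map ρ, by
    apply φ.2.subset
    intro δ hδ
    intro h
    simp only [mem_setOf_eq, h] at hδ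
    exact hδ rfl⟩

/-- `ψ` is a restriction of `φ`. -/
def IsRestrictionOf (ψ φ : FPC Γ) : Prop := ∀ δ : Γ, ψ.1 δ = none ∨ ψ.1 δ = φ.1 δ

/-- A `Γ`-ideal: a shift-invariant set of finite partial colorings closed under
restrictions. -/
def IsGammaIdeal [Group Γ] (P : Set (FPC Γ)) : Prop :=
  (∀ (γ : Γ), ∀ φ ∈ P, shiftP γ φ ∈ P) ∧
  (∀ φ ∈ P, ∀ ψ : FPC Γ, IsRestrictionOf ψ φ → ψ ∈ P)

/-- An extendable `Γ`-ideal. -/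
def IsExtendable [DecidableEq Γ] (P : Set (FPC Γ)) : Prop :=
  ∀ φ ∈ P, ∀ γ : Γ, φ.1 γ = none → ∃ c : ℕ, insertP φ γ c ∈ P

/-- `φ` and `ψ` are `R`-separated: `dist(dom φ, dom ψ) > R φ + R ψ`. -/
def RSeparated [MetricSpace Γ] (R : FPC Γ → ℝ) (φ ψ : FPC Γ) : Prop :=
  ∀ γ ∈ domP φ, ∀ δ ∈ domP ψ, R φ + R ψ < dist γ δ

/-- The join property of a `Γ`-ideal `P`. -/
def HasJoinProperty [Group Γ] [MetricSpace Γ] (P : Set (FPC Γ)) : Prop :=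
  ∃ R : FPC Γ → ℝ, (∀ φ, 0 ≤ R φ) ∧ (∀ (γ : Γ), ∀ φ ∈ P, R (shiftP γ φ) = R φ) ∧
    ∀ l : List (FPC Γ), (∀ φ ∈ l, φ ∈ P) → l.Pairwise (RSeparated R) → joinList l ∈ P

/-- `P^loc_r`: partial colorings that are `r`-locally in `P`. -/
def LocallyIn [MetricSpace Γ] (P : Set (FPC Γ)) (r : ℕ → ℝ) : Set (FPC Γ) :=
  {φ | ∀ (γ : Γ) (c : ℕ), φ.1 γ = some c → restrictBall φ γ (r c) ∈ P}

/-- A local `Γ`-ideal. -/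
def IsLocal [MetricSpace Γ] (P : Set (FPC Γ)) : Prop :=
  ∃ r : ℕ → ℝ, (∀ c, 0 ≤ r c) ∧ P = LocallyIn P r

/-- `Col(P)`: colorings all of whose finite restrictions lie in `P`. -/
def ColOf [DecidableEq Γ] (P : Set (FPC Γ)) : Set (Γ → ℕ) :=
  {ω | ∀ S : Finset Γ, restrictTo ω S ∈ P}

/-! ### The space of Baire measurable functions -/

/-- Baire measurable functions from `X` to `Y`. -/
abbrev BMFunSub (X Y : Type*) [TopologicalSpace X] [MeasurableSpace Y] :=
  {f : X → Y // BaireMFun f}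

/-- Equality on a comeager set. -/
def BFunRel {X Y : Type*} [TopologicalSpace X] [MeasurableSpace Y]
    (f g : BMFunSub X Y) : Prop := {x : X | f.1 x = g.1 x} ∈ residual X

/-- `B(X,Y)`: Baire measurable functions modulo equality on a comeager set. -/
abbrev BFun (X Y : Type*) [TopologicalSpace X] [MeasurableSpace Y] :=
  Quot (BFunRel (X := X) (Y := Y))

/-- `[U, A]`: the classes of functions `f` with `U ∖ f⁻¹(A)` meager. -/
def forceSet {X Y : Type*} [TopologicalSpace X] [MeasurableSpace Y]
    (U : Set X) (A : Set Y) : Set (BFun X Y) :=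
  {F | ∃ f : BMFunSub X Y, Quot.mk BFunRel f = F ∧ IsMeagre (U \ f.1 ⁻¹' A)}

/-- `Σ(X,Y)`: the σ-algebra generated by the sets `[U, A]` for `U` nonempty open
and `A` Borel. -/
def SigmaXY (X Y : Type*) [TopologicalSpace X] [MeasurableSpace Y] :
    MeasurableSpace (BFun X Y) :=
  MeasurableSpace.generateFrom
    {S | ∃ (U : Set X) (A : Set Y), IsOpen U ∧ U.Nonempty ∧ MeasurableSet A ∧ S = forceSet U A}

/-! Each `[U, A]` is the countable intersection of the `[V, A]` over basic `V ⊆ U`, and, since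
`f⁻¹(A)` has the Baire property and basic sets are non-meagre, `[V, Aᶜ]` is the complement of
the countable union of the `[W, A]` over basic `W ⊆ V`. So the Borel sets `A` whose `[V, A]`,
`V ∈ 𝒰`, all lie in the σ-algebra generated by the `[V, A']`, `V ∈ 𝒰`, `A' ∈ 𝒜`, form a
σ-algebra containing `𝒜`. -/

section BaireCategory

variable {X : Type*} [TopologicalSpace X]

theorem isMeagre_sdiff_iff_forall_basis {𝒰 : Set (Set X)} (h𝒰c : 𝒰.Countable)
    (h𝒰b : TopologicalSpace.IsTopologicalBasis 𝒰) {U : Set X} (hU : IsOpen U) (S : Set X) :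
    IsMeagre (U \ S) ↔ ∀ V ∈ 𝒰, V ⊆ U → IsMeagre (V \ S) := by
  refine ⟨fun h V _ hVU => h.mono (sdiff_subset_sdiff_left hVU), fun h => ?_⟩
  obtain ⟨𝒱, h𝒱𝒰, rfl⟩ := h𝒰b.open_eq_sUnion hU
  simp only [sUnion_eq_biUnion, iUnion_sdiff]
  exact isMeagre_biUnion (h𝒰c.mono h𝒱𝒰) fun V hV => h V (h𝒱𝒰 hV) (subset_sUnion_of_mem hV)

theorem isMeagre_inter_iff_forall_basis [BaireSpace X] {𝒰 : Set (Set X)}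
    (h𝒰b : TopologicalSpace.IsTopologicalBasis 𝒰) (h𝒰ne : ∀ V ∈ 𝒰, V.Nonempty)
    {U : Set X} (hU : IsOpen U) {S : Set X} (hS : BaireMSet S) :
    IsMeagre (U ∩ S) ↔ ∀ V ∈ 𝒰, V ⊆ U → ¬IsMeagre (V \ S) := by
  constructor
  · intro h V hV𝒰 hVU hVS
    refine not_isMeagre_of_isOpen (h𝒰b.isOpen hV𝒰) (h𝒰ne V hV𝒰) ?_
    refine (h.union hVS).mono fun x hx => ?_
    by_cases hxS : x ∈ S
    exacts [Or.inl ⟨hVU hx, hxS⟩, Or.inr ⟨hx, hxS⟩]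
  · intro h
    obtain ⟨W, hW, hSW⟩ := hS
    rw [symmDiff_def] at hSW
    have hUW : U ∩ W = ∅ := by
      by_contra hne
      obtain ⟨x, hx⟩ := nonempty_iff_ne_empty.mpr hne
      obtain ⟨V, hV𝒰, -, hVUW⟩ := h𝒰b.exists_subset_of_mem_open hx (hU.inter hW)
      exact h V hV𝒰 (hVUW.trans inter_subset_left)
        (hSW.mono fun y hy => Or.inr ⟨(hVUW hy.1).2, hy.2⟩)
    exact hSW.mono fun x hx => Or.inl ⟨hx.2, fun hxW => (hUW.subset ⟨hx.1, hxW⟩ :)⟩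

end BaireCategory

section ForceSet

open MeasureTheory

variable {X Y : Type*} [TopologicalSpace X] [MeasurableSpace Y]

theorem isMeagre_sdiff_preimage_of_bFunRel (U : Set X) (A : Set Y) {f g : BMFunSub X Y}
    (hfg : BFunRel f g) (hf : IsMeagre (U \ f.1 ⁻¹' A)) : IsMeagre (U \ g.1 ⁻¹' A) := by
  have hne : IsMeagre {x | f.1 x = g.1 x}ᶜ := by rwa [IsMeagre, compl_compl]
  refine (hf.union hne).mono fun x hx => ?_
  by_cases hx' : f.1 x = g.1 x
  · exact Or.inl ⟨hx.1, fun hxA => hx.2 (by simpa [mem_preimage, hx'] using hxA)⟩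
  · exact Or.inr hx'

theorem mem_forceSet_mk {U : Set X} {A : Set Y} {f : BMFunSub X Y} :
    Quot.mk BFunRel f ∈ forceSet U A ↔ IsMeagre (U \ f.1 ⁻¹' A) := by
  refine ⟨fun ⟨g, hgf, hg⟩ => ?_, fun h => ⟨f, rfl, h⟩⟩
  let meagreOutside : BFun X Y → Prop :=
    Quot.lift (fun f => IsMeagre (U \ f.1 ⁻¹' A)) fun _ _ h =>
      propext ⟨isMeagre_sdiff_preimage_of_bFunRel U A h,
        isMeagre_sdiff_preimage_of_bFunRel U A (Filter.mem_of_superset h fun _ => Eq.symm)⟩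
  exact cast (congrArg meagreOutside hgf) hg

theorem forceSet_univ (U : Set X) : forceSet U (univ : Set Y) = univ := by
  ext F
  induction F using Quot.ind
  simpa [mem_forceSet_mk] using IsMeagre.empty

theorem forceSet_iInter {ι : Type*} [Countable ι] (U : Set X) (A : ι → Set Y) :
    forceSet U (⋂ i, A i) = ⋂ i, forceSet U (A i) := by
  ext F
  induction F using Quot.ind
  simp only [mem_iInter, mem_forceSet_mk, preimage_iInter, sdiff_iInter]
  exact ⟨fun h i => h.mono (subset_iUnion (fun i => U \ _ ⁻¹' A i) i), isMeagre_iUnion⟩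

variable {𝒰 : Set (Set X)}

theorem forceSet_eq_biInter_basis (h𝒰c : 𝒰.Countable)
    (h𝒰b : TopologicalSpace.IsTopologicalBasis 𝒰) {U : Set X} (hU : IsOpen U) (A : Set Y) :
    forceSet U A = ⋂ V ∈ {V | V ∈ 𝒰 ∧ V ⊆ U}, forceSet V A := by
  ext F
  induction F using Quot.ind
  simp only [mem_iInter₂, mem_ofPred_eq, mem_forceSet_mk, and_imp]
  exact isMeagre_sdiff_iff_forall_basis h𝒰c h𝒰b hU _

theorem forceSet_compl [BaireSpace X] (h𝒰b : TopologicalSpace.IsTopologicalBasis 𝒰)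
    (h𝒰ne : ∀ V ∈ 𝒰, V.Nonempty) {U : Set X} (hU : IsOpen U) {A : Set Y}
    (hA : MeasurableSet A) :
    forceSet U Aᶜ = (⋃ V ∈ {V | V ∈ 𝒰 ∧ V ⊆ U}, forceSet V A)ᶜ := by
  ext F
  induction F using Quot.ind with
  | mk f =>
    simp only [mem_compl_iff, mem_iUnion₂, mem_ofPred_eq, mem_forceSet_mk, preimage_compl,
      sdiff_compl, not_exists, and_imp]
    exact isMeagre_inter_iff_forall_basis h𝒰b h𝒰ne hU (f.2 A hA)

theorem measurableSet_forceSet_of_generateFrom [BaireSpace X] (h𝒰c : 𝒰.Countable)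
    (h𝒰b : TopologicalSpace.IsTopologicalBasis 𝒰) (h𝒰ne : ∀ V ∈ 𝒰, V.Nonempty)
    {𝒜 : Set (Set Y)} (h𝒜gen : MeasurableSpace.generateFrom 𝒜 = ‹MeasurableSpace Y›)
    {U : Set X} (hU : IsOpen U) {A : Set Y} (hA : MeasurableSet A) :
    MeasurableSet[MeasurableSpace.generateFrom {S | ∃ U ∈ 𝒰, ∃ A ∈ 𝒜, S = forceSet U A}]
      (forceSet U A) := by
  set G := MeasurableSpace.generateFrom {S | ∃ U ∈ 𝒰, ∃ A ∈ 𝒜, S = forceSet U A}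
  suffices hbasic : ∀ V ∈ 𝒰, MeasurableSet[G] (forceSet V A) by
    rw [forceSet_eq_biInter_basis h𝒰c h𝒰b hU]
    exact .biInter (h𝒰c.mono fun _ hV => hV.1) fun V hV => hbasic V hV.1
  have compl : ∀ B : Set Y, MeasurableSet B → (∀ V ∈ 𝒰, MeasurableSet[G] (forceSet V B)) →
      ∀ V ∈ 𝒰, MeasurableSet[G] (forceSet V Bᶜ) := fun B hB h V hV => by
    rw [forceSet_compl h𝒰b h𝒰ne (h𝒰b.isOpen hV) hB]
    exact (MeasurableSet.biUnion (h𝒰c.mono fun _ hW => hW.1) fun W hW => h W hW.1).compl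
  rw [← h𝒜gen] at hA
  induction A, hA using MeasurableSpace.generateFrom_induction with
  | hC B hB => exact fun V hV => MeasurableSpace.measurableSet_generateFrom ⟨V, hV, B, hB, rfl⟩
  | empty =>
    simpa only [compl_univ] using
      compl univ .univ fun V _ => by simp only [forceSet_univ, MeasurableSet.univ]
  | compl B hB h => exact compl B (h𝒜gen ▸ hB) h
  | iUnion B hB h =>
    have hBc : ∀ n, MeasurableSet (B n)ᶜ := fun n => (h𝒜gen ▸ hB n).compl
    rw [iUnion_eq_compl_iInter_compl]
    refine compl _ (.iInter hBc) fun V hV => ?_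
    rw [forceSet_iInter]
    exact .iInter fun n => compl _ (h𝒜gen ▸ hB n) (h n) V hV

end ForceSet

theorem stmt5_general (X Y : Type*) [TopologicalSpace X] [PolishSpace X]
    [mY : MeasurableSpace Y]
    (𝒰 : Set (Set X)) (h𝒰c : 𝒰.Countable)
    (h𝒰b : TopologicalSpace.IsTopologicalBasis 𝒰)
    (h𝒰ne : ∀ U ∈ 𝒰, U.Nonempty)
    (𝒜 : Set (Set Y))
    (h𝒜gen : MeasurableSpace.generateFrom 𝒜 = mY) :
    SigmaXY X Y =
      MeasurableSpace.generateFrom {S | ∃ U ∈ 𝒰, ∃ A ∈ 𝒜, S = forceSet U A} := by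
  refine le_antisymm (MeasurableSpace.generateFrom_le ?_) (MeasurableSpace.generateFrom_le ?_)
  · rintro _ ⟨U, A, hU, -, hA, rfl⟩
    exact measurableSet_forceSet_of_generateFrom h𝒰c h𝒰b h𝒰ne h𝒜gen hU hA
  · rintro _ ⟨U, hU, A, hA, rfl⟩
    refine MeasurableSpace.measurableSet_generateFrom ⟨U, A, h𝒰b.isOpen hU, h𝒰ne U hU, ?_, rfl⟩
    exact h𝒜gen ▸ MeasurableSpace.measurableSet_generateFrom hA

/-- `Σ(X,Y)` is generated by the sets `[U, A]` with `U` in a countable basis of nonempty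
open sets and `A` in a countable generating family of Borel sets. -/
theorem stmt5 (X Y : Type*) [TopologicalSpace X] [PolishSpace X]
    [mY : MeasurableSpace Y] [StandardBorelSpace Y]
    (𝒰 : Set (Set X)) (h𝒰c : 𝒰.Countable)
    (h𝒰b : TopologicalSpace.IsTopologicalBasis 𝒰)
    (h𝒰ne : ∀ U ∈ 𝒰, U.Nonempty)
    (𝒜 : Set (Set Y)) (h𝒜c : 𝒜.Countable)
    (h𝒜gen : MeasurableSpace.generateFrom 𝒜 = mY) :
    SigmaXY X Y =
      MeasurableSpace.generateFrom {S | ∃ U ∈ 𝒰, ∃ A ∈ 𝒜, S = forceSet U A} :=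
  stmt5_general X Y (mY := mY) 𝒰 h𝒰c h𝒰b h𝒰ne 𝒜 h𝒜gen

end DescColor
end

section
/- Let Γ be a countably infinite group and let Ω₀, Ω₁, … ⊆ ℕ^Γ be a countable sequence of hard subshifts. If Ω := ⋃ᵢ Ωᵢ is a subshift (i.e., is closed), then Ω is also hard. -/
open Set Function Topology

namespace DescColor

variable {Γ : Type*}

/-! The coding `x ↦ π_f(x)` pulls `Ωᵢ` back to invariant Baire measurable sets `Sᵢ`, and by
countability of `Γ` each `Sᵢ` agrees up to a meagre set with an invariant open set `Vᵢ` (the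
saturation of an open set approximating `Sᵢ`). On the Polish space `Vᵢ`, `f` is an `Ωᵢ`-coloring,
so hardness of `Ωᵢ` gives a Baire measurable complete invariant `Gᵢ` of the orbits in `Vᵢ`. Since
`⋃ Sᵢ` is comeagre, so is `⋃ Vᵢ`, and `x ↦ (i + 1, Gᵢ x)` for the least `i` with `x ∈ Vᵢ` is a
complete invariant on `⋃ Vᵢ`. On the meagre invariant remainder any injective function of an orbit
representative will do, as no measurability is needed there. -/

open Filter

section BaireMeasurable

variable {X Y Z : Type*} [TopologicalSpace X]

lemma isMeagre_symmDiff_iff {s t : Set X} : IsMeagre (symmDiff s t) ↔ s =ᵇ t := by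
  have hcompl : (symmDiff s t)ᶜ = {x | x ∈ s ↔ x ∈ t} := by
    ext x
    simp only [mem_compl_iff, Set.mem_symmDiff, mem_ofPred_eq]
    tauto
  rw [eventuallyEq_set, IsMeagre, hcompl]
  rfl

lemma baireMSet_iff {s : Set X} : BaireMSet s ↔ BaireMeasurableSet s := by
  simp only [BaireMSet, isMeagre_symmDiff_iff, BaireMeasurableSet.iff_residualEq_isOpen]

lemma _root_.BaireMeasurableSet.image_val {U : Set X} (hU : IsOpen U) {A : Set U}
    (hA : BaireMeasurableSet A) : BaireMeasurableSet (Subtype.val '' A : Set X) := by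
  obtain ⟨O, hO, hAO⟩ := hA.residualEq_isOpen
  refine (hU.isOpenMap_subtype_val O hO).baireMeasurableSet.congr ?_
  rw [← isMeagre_symmDiff_iff, ← image_symmDiff Subtype.val_injective, symmDiff_comm]
  exact (isMeagre_symmDiff_iff.2 hAO).image_val

variable [MeasurableSpace Y] [MeasurableSpace Z]

lemma BaireMFun.comp_measurable {f : X → Y} {g : Y → Z} (hf : BaireMFun f) (hg : Measurable g) :
    BaireMFun (g ∘ f) :=
  fun _ hB => hf _ (hg hB)

lemma BaireMFun.comp_isOpenMap {W : Type*} [TopologicalSpace W] {f : X → Y} {g : W → X}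
    (hf : BaireMFun f) (hc : Continuous g) (ho : IsOpenMap g) : BaireMFun (f ∘ g) :=
  fun B hB => baireMSet_iff.2 ((baireMSet_iff.1 (hf B hB)).preimage hc ho)

lemma baireMFun_prodMk_of_pieces {idx : X → ℕ} {H : ℕ → X → Y}
    (hH : ∀ n B, MeasurableSet B → BaireMeasurableSet ({x | idx x = n} ∩ H n ⁻¹' B)) :
    BaireMFun fun x => (idx x, H (idx x) x) := by
  intro B hB
  have hpre : (fun x => (idx x, H (idx x) x)) ⁻¹' B =
      ⋃ n, {x | idx x = n} ∩ H n ⁻¹' (Prod.mk n ⁻¹' B) := by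
    ext x
    simp
  rw [baireMSet_iff, hpre]
  exact .iUnion fun n => hH n _ (measurable_prodMk_left hB)

end BaireMeasurable

/-- `0` if `x` lies in no `V i`, and `i + 1` for the least `i` with `x ∈ V i`. -/
noncomputable def firstIndex {X : Type*} (V : ℕ → Set X) (x : X) : ℕ :=
  open Classical in if h : ∃ i, x ∈ V i then Nat.find h + 1 else 0

section FirstIndex

variable {X : Type*} {V : ℕ → Set X} {x : X}

lemma firstIndex_eq_zero_iff : firstIndex V x = 0 ↔ x ∉ ⋃ i, V i := by
  rw [mem_iUnion, firstIndex]
  split_ifs with h <;> simp [h]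

lemma firstIndex_eq_succ_iff {n : ℕ} : firstIndex V x = n + 1 ↔ x ∈ V n ∧ ∀ j < n, x ∉ V j := by
  classical
  rw [firstIndex]
  split_ifs with h
  · rw [Nat.add_right_cancel_iff, Nat.find_eq_iff]
  · simp only [not_exists] at h
    simp [h]

lemma firstIndex_congr {y : X} (h : ∀ i, x ∈ V i ↔ y ∈ V i) : firstIndex V x = firstIndex V y := by
  rcases hx : firstIndex V x with _ | n
  · rw [eq_comm, firstIndex_eq_zero_iff]
    simpa [h] using firstIndex_eq_zero_iff.1 hx
  · rw [eq_comm, firstIndex_eq_succ_iff]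
    simpa [h] using firstIndex_eq_succ_iff.1 hx

lemma setOf_firstIndex_eq_succ (n : ℕ) :
    {x | firstIndex V x = n + 1} = V n \ ⋃ j, ⋃ _ : j < n, V j := by
  ext x
  simp [firstIndex_eq_succ_iff]

end FirstIndex

lemma prodMk_index_eq_iff {X Y : Type*} {r : X → X → Prop} {idx : X → ℕ} {H : ℕ → X → Y}
    (hidx : ∀ x y, r x y → idx x = idx y)
    (hH : ∀ x y, idx x = idx y → (H (idx x) x = H (idx x) y ↔ r x y)) (x y : X) :
    (idx x, H (idx x) x) = (idx y, H (idx y) y) ↔ r x y := by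
  rw [Prod.mk.injEq]
  constructor
  · rintro ⟨h, hxy⟩
    rw [← h] at hxy
    exact (hH x y h).1 hxy
  · intro hr
    have h := hidx x y hr
    rw [← h]
    exact ⟨rfl, (hH x y h).2 hr⟩

namespace FreePolishAction

variable [Group Γ] (α : FreePolishAction Γ)

instance : TopologicalSpace α.X := α.ts

instance : PolishSpace α.X := α.polish

def coding (f : α.X → ℕ) (x : α.X) : Γ → ℕ := fun γ => f (α.smul γ x)

def IsInvariant (S : Set α.X) : Prop := ∀ γ, ∀ x ∈ S, α.smul γ x ∈ S

def IsCompleteInvariantOn {Y : Type*} (S : Set α.X) (G : α.X → Y) : Prop :=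
  ∀ x ∈ S, ∀ y ∈ S, G x = G y ↔ ∃ γ, α.smul γ x = y

lemma inv_smul_smul (γ : Γ) (x : α.X) : α.smul γ⁻¹ (α.smul γ x) = x := by
  rw [← α.mul_smul', inv_mul_cancel, α.one_smul']

lemma smul_inv_smul (γ : Γ) (x : α.X) : α.smul γ (α.smul γ⁻¹ x) = x := by
  simpa using α.inv_smul_smul γ⁻¹ x

def smulHomeomorph (γ : Γ) : α.X ≃ₜ α.X where
  toFun := α.smul γ
  invFun := α.smul γ⁻¹
  left_inv := α.inv_smul_smul γ
  right_inv := α.smul_inv_smul γ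
  continuous_toFun := α.cont γ
  continuous_invFun := α.cont γ⁻¹

lemma isOpenMap_smul (γ : Γ) : IsOpenMap (α.smul γ) := (α.smulHomeomorph γ).isOpenMap

variable {α}

lemma IsInvariant.smul_mem_iff {S : Set α.X} (hS : α.IsInvariant S) (γ : Γ) (x : α.X) :
    α.smul γ x ∈ S ↔ x ∈ S :=
  ⟨fun h => α.inv_smul_smul γ x ▸ hS γ⁻¹ _ h, hS γ x⟩

lemma isInvariant_setOf_coding_mem {Ω : Set (Γ → ℕ)} (hΩ : ∀ γ, ∀ ω ∈ Ω, shift γ ω ∈ Ω)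
    (f : α.X → ℕ) : α.IsInvariant {x | α.coding f x ∈ Ω} := by
  intro γ x hx
  have hshift : α.coding f (α.smul γ x) = shift γ (α.coding f x) := by
    funext δ
    simp only [coding, shift, α.mul_smul']
  change α.coding f (α.smul γ x) ∈ Ω
  rw [hshift]
  exact hΩ γ _ hx

lemma baireMeasurableSet_setOf_coding_mem {f : α.X → ℕ} (hf : BaireMFun f)
    {Ω : Set (Γ → ℕ)} (hΩ : MeasurableSet Ω) : BaireMeasurableSet {x | α.coding f x ∈ Ω} := by
  let _ : MeasurableSpace α.X := eventuallyMeasurableSpace (borel α.X) (residual α.X)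
  have hcoord (γ : Γ) : Measurable fun x => f (α.smul γ x) := fun B _ =>
    (baireMSet_iff.1 (hf B .of_discrete)).preimage (α.cont γ) (α.isOpenMap_smul γ)
  exact measurable_pi_lambda _ hcoord hΩ

theorem IsInvariant.exists_isOpen_residualEq [Countable Γ] {S : Set α.X}
    (hS : α.IsInvariant S) (hS_bm : BaireMeasurableSet S) :
    ∃ V, IsOpen V ∧ α.IsInvariant V ∧ S =ᵇ V := by
  obtain ⟨U, hU, hSU⟩ := hS_bm.residualEq_isOpen
  refine ⟨⋃ γ, α.smul γ ⁻¹' U, isOpen_iUnion fun γ => hU.preimage (α.cont γ), ?_, ?_⟩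
  · intro γ x hx
    obtain ⟨δ, hδ⟩ := mem_iUnion.1 hx
    refine mem_iUnion.2 ⟨δ * γ⁻¹, ?_⟩
    rwa [mem_preimage, α.mul_smul', α.inv_smul_smul]
  · have hpre (γ : Γ) : α.smul γ ⁻¹' S = S := ext (hS.smul_mem_iff γ)
    have hS_eq : S = ⋃ γ : Γ, α.smul γ ⁻¹' S := by simp only [hpre, iUnion_const]
    refine hS_eq.eventuallyEq.trans (Filter.EventuallyEq.countable_iUnion fun γ => ?_)
    exact hSU.comp_tendsto (tendsto_residual_of_isOpenMap (α.cont γ) (α.isOpenMap_smul γ))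

variable (α) in
def restrict {V : Set α.X} (hV : IsOpen V) (hinv : α.IsInvariant V) : FreePolishAction Γ where
  X := V
  ts := inferInstance
  polish := hV.polishSpace
  smul γ y := ⟨α.smul γ y, hinv γ y y.2⟩
  one_smul' y := Subtype.ext (α.one_smul' y)
  mul_smul' γ δ y := Subtype.ext (α.mul_smul' γ δ y)
  cont γ := ((α.cont γ).comp continuous_subtype_val).subtype_mk _
  free γ y h := α.free γ y (congrArg Subtype.val h)

theorem hasBMCol_restrict {V : Set α.X} (hV : IsOpen V) (hinv : α.IsInvariant V)
    {Ω : Set (Γ → ℕ)} {f : α.X → ℕ} (hf : BaireMFun f)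
    (hfV : ∀ᶠ x in residual α.X, x ∈ V → α.coding f x ∈ Ω) :
    (α.restrict hV hinv).HasBMCol Ω := by
  refine ⟨f ∘ Subtype.val, hf.comp_isOpenMap continuous_subtype_val hV.isOpenMap_subtype_val, ?_⟩
  filter_upwards [tendsto_residual_of_isOpenMap continuous_subtype_val
    hV.isOpenMap_subtype_val hfV] with y hy using hy y.2

theorem exists_isCompleteInvariantOn_of_isGenSmooth_restrict {V : Set α.X} (hV : IsOpen V)
    (hinv : α.IsInvariant V) (h : (α.restrict hV hinv).IsGenSmooth) :
    ∃ G : α.X → ℝ, (∀ B, MeasurableSet B → BaireMeasurableSet (V ∩ G ⁻¹' B)) ∧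
      α.IsCompleteInvariantOn V G := by
  obtain ⟨g, hg, hg_inv⟩ : ∃ g : V → ℝ, BaireMFun g ∧
      ∀ x y : V, g x = g y ↔ ∃ γ, (⟨α.smul γ x, hinv γ x x.2⟩ : V) = y := h
  have hext (y : V) : extend Subtype.val g 0 y = g y := Subtype.val_injective.extend_apply _ _ _
  refine ⟨extend Subtype.val g 0, fun B hB => ?_, fun x hx y hy => ?_⟩
  · have hpre : V ∩ extend Subtype.val g 0 ⁻¹' B = Subtype.val '' (g ⁻¹' B) := by
      ext x
      constructor
      · rintro ⟨hx, hxB⟩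
        exact ⟨⟨x, hx⟩, by rwa [mem_preimage, ← hext], rfl⟩
      · rintro ⟨y, hyB, rfl⟩
        exact ⟨y.2, by rwa [mem_preimage, hext]⟩
    rw [hpre]
    exact (baireMSet_iff.1 (hg B hB)).image_val hV
  · rw [hext ⟨x, hx⟩, hext ⟨y, hy⟩, hg_inv]
    simp only [Subtype.ext_iff]

variable (α) in
theorem exists_isCompleteInvariantOn_univ : ∃ c : α.X → ℝ, α.IsCompleteInvariantOn univ c := by
  let orbits : Setoid α.X :=
    { r := fun x y => ∃ γ, α.smul γ x = y
      iseqv :=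
        { refl := fun x => ⟨1, α.one_smul' x⟩
          symm := fun ⟨γ, h⟩ => ⟨γ⁻¹, by rw [← h, α.inv_smul_smul]⟩
          trans := fun ⟨γ, h⟩ ⟨δ, h'⟩ => ⟨δ * γ, by rw [α.mul_smul', h, h']⟩ } }
  borelize α.X
  obtain ⟨e, he⟩ := MeasureTheory.exists_measurableEmbedding_real α.X
  refine ⟨fun x => e (Quotient.mk orbits x).out, fun x _ y _ => ?_⟩
  rw [he.injective.eq_iff, Quotient.out_inj, Quotient.eq]
  rfl

theorem isGenSmooth_of_iUnion_mem_residual {V : ℕ → Set α.X}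
    (hV : ∀ i, BaireMeasurableSet (V i)) (hinv : ∀ i, α.IsInvariant (V i))
    (hcover : (⋃ i, V i) ∈ residual α.X)
    (hG : ∀ i, ∃ G : α.X → ℝ, (∀ B, MeasurableSet B → BaireMeasurableSet (V i ∩ G ⁻¹' B)) ∧
      α.IsCompleteInvariantOn (V i) G) :
    α.IsGenSmooth := by
  choose G hG_bm hG_inv using hG
  obtain ⟨c, hc⟩ := α.exists_isCompleteInvariantOn_univ
  obtain ⟨e, he⟩ := MeasureTheory.exists_measurableEmbedding_real (ℕ × ℝ)
  let H : ℕ → α.X → ℝ := fun n => Nat.casesOn n c G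
  have hpieces (n : ℕ) (B : Set ℝ) (hB : MeasurableSet B) :
      BaireMeasurableSet ({x | firstIndex V x = n} ∩ H n ⁻¹' B) := by
    rcases n with _ | n
    · have hzero : {x | firstIndex V x = 0} = (⋃ i, V i)ᶜ := ext fun _ => firstIndex_eq_zero_iff
      refine (IsMeagre.inter ?_).baireMeasurableSet
      rwa [hzero, IsMeagre, compl_compl]
    · have hsub : {x | firstIndex V x = n + 1} ⊆ V n := fun x hx => (firstIndex_eq_succ_iff.1 hx).1
      rw [← inter_eq_left.2 hsub, inter_assoc, setOf_firstIndex_eq_succ]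
      exact ((hV n).diff (.iUnion fun j => .iUnion fun _ => hV j)).inter (hG_bm n B hB)
  have hidx (x y : α.X) (hxy : ∃ γ, α.smul γ x = y) : firstIndex V x = firstIndex V y := by
    obtain ⟨γ, rfl⟩ := hxy
    exact firstIndex_congr fun i => ((hinv i).smul_mem_iff γ x).symm
  have hH (x y : α.X) (h : firstIndex V x = firstIndex V y) :
      H (firstIndex V x) x = H (firstIndex V x) y ↔ ∃ γ, α.smul γ x = y := by
    rcases hx : firstIndex V x with _ | n
    · exact hc x trivial y trivial
    · rw [hx] at h
      exact hG_inv n x (firstIndex_eq_succ_iff.1 hx).1 y (firstIndex_eq_succ_iff.1 h.symm).1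
  refine ⟨_, (baireMFun_prodMk_of_pieces hpieces).comp_measurable he.measurable, fun x y => ?_⟩
  rw [comp_apply, comp_apply, he.injective.eq_iff]
  exact prodMk_index_eq_iff hidx hH x y

end FreePolishAction

theorem stmt8_general {Γ : Type*} [Group Γ] [Countable Γ]
    (Ω : ℕ → Set (Γ → ℕ)) (hsub : ∀ i, IsSubshift (Ω i)) (hhard : ∀ i, Hard Γ (Ω i)) :
    Hard Γ (⋃ i, Ω i) := by
  rintro α ⟨f, hf, hres⟩
  let S i := {x | α.coding f x ∈ Ω i}
  have hS_inv i : α.IsInvariant (S i) := FreePolishAction.isInvariant_setOf_coding_mem (hsub i).2 f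
  have hS_bm i : BaireMeasurableSet (S i) :=
    FreePolishAction.baireMeasurableSet_setOf_coding_mem hf (hsub i).1.measurableSet
  choose V hV_open hV_inv hSV using fun i => (hS_inv i).exists_isOpen_residualEq (hS_bm i)
  refine FreePolishAction.isGenSmooth_of_iUnion_mem_residual
    (fun i => (hV_open i).baireMeasurableSet) hV_inv ?_ fun i =>
      FreePolishAction.exists_isCompleteInvariantOn_of_isGenSmooth_restrict (hV_open i) (hV_inv i)
        (hhard i _ (FreePolishAction.hasBMCol_restrict (hV_open i) (hV_inv i) hf ?_))
  · filter_upwards [hres, (Filter.EventuallyEq.countable_iUnion hSV).mem_iff] with x hx hSV_x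
    obtain ⟨i, hi⟩ := mem_iUnion.1 hx
    exact hSV_x.1 (mem_iUnion.2 ⟨i, hi⟩)
  · filter_upwards [(hSV i).mem_iff] with x hx hxV using hx.2 hxV

/-- A countable union of hard subshifts which is itself a subshift is hard. -/
theorem stmt8 {Γ : Type*} [Group Γ] [Countable Γ] [Infinite Γ]
    (Ω : ℕ → Set (Γ → ℕ)) (hsub : ∀ i, IsSubshift (Ω i)) (hhard : ∀ i, Hard Γ (Ω i))
    (hclosed : IsClosed (⋃ i, Ω i)) :
    Hard Γ (⋃ i, Ω i) :=
  stmt8_general Ω hsub hhard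

end DescColor
end
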